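/- Let $H$ be a hypergraph in which every edge contains at least $k$ vertices and meets (i.e., intersects) at most $d$ other edges. If $e(d+2) \leq 2^{k}$ (where $e$ is Euler's number), then $H$ has a 2-coloring, i.e., there exists a coloring of the vertices of $H$ with 2 colors such that no edge of $H$ is monochromatic. -/

import Mathlib

/-!
Colour the vertices covered by `E` uniformly at random and let `(f, j)` be the event that the
edge `f` is monochromatic of colour `j`; it has probability at most `2⁻ᵏ`. If `f` has colour `j`,
recolouring `f` arbitrarily keeps every vertex witnessing that an edge `g` is not monochromatic of
colour `j'`, unless `g` meets `f` and `j' ≠ j`. So `(f, j)` still has probability at most `2⁻ᵏ`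
conditioned on avoiding any family of events outside its at most `d + 1` such "conflicts", and the
symmetric lopsided Local Lemma, with `e · 2⁻ᵏ · (d + 2) ≤ 1`, produces a colouring avoiding every
event. Probabilities are replaced by cardinalities throughout.
-/

open Finset

namespace LocalLemma

variable {Ω ι : Type*} [Fintype Ω] [DecidableEq Ω] (A : ι → Finset Ω)

def avoiding (S : Finset ι) : Finset Ω := univ.filter fun ω => ∀ i ∈ S, ω ∉ A i

variable {A}

@[simp]
lemma mem_avoiding {S : Finset ι} {ω : Ω} : ω ∈ avoiding A S ↔ ∀ i ∈ S, ω ∉ A i := by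
  simp [avoiding]

@[simp]
lemma avoiding_empty : avoiding A ∅ = univ := by
  ext; simp

lemma avoiding_anti : Antitone (avoiding A) :=
  fun _ _ hST _ hω ↦ mem_avoiding.2 fun i hi ↦ mem_avoiding.1 hω i (hST hi)

variable [DecidableEq ι]

lemma avoiding_insert (i : ι) (S : Finset ι) : avoiding A (insert i S) = avoiding A S \ A i := by
  ext; simp [and_comm]

lemma one_sub_mul_card_avoiding_le {x : ℝ} {i : ι} {S : Finset ι}
    (h : ((avoiding A S ∩ A i).card : ℝ) ≤ x * (avoiding A S).card) :
    (1 - x) * (avoiding A S).card ≤ (avoiding A (insert i S)).card := by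
  have hcard : ((avoiding A (insert i S)).card : ℝ) =
      (avoiding A S).card - (avoiding A S ∩ A i).card := by
    rw [avoiding_insert, ← sdiff_inter_self_left, card_sdiff_of_subset inter_subset_left,
      Nat.cast_sub (card_le_card inter_subset_left)]
  linarith

lemma one_sub_pow_mul_card_avoiding_le {x : ℝ} (hx : x ≤ 1) (S T : Finset ι)
    (h : ∀ T' ⊂ T, ∀ i ∈ T,
      ((avoiding A (S ∪ T') ∩ A i).card : ℝ) ≤ x * (avoiding A (S ∪ T')).card) :
    (1 - x) ^ T.card * (avoiding A S).card ≤ (avoiding A (S ∪ T)).card := by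
  induction T using Finset.induction_on with
  | empty => simp
  | insert i T hi ih =>
    have hT : T ⊂ insert i T := ssubset_insert hi
    calc (1 - x) ^ (insert i T).card * (avoiding A S).card
        = (1 - x) * ((1 - x) ^ T.card * (avoiding A S).card) := by
          rw [card_insert_of_notMem hi, pow_succ]; ring
      _ ≤ (1 - x) * (avoiding A (S ∪ T)).card := by
          gcongr
          exact ih fun T' hT' j hj ↦ h T' (hT'.trans hT) j (mem_insert_of_mem hj)
      _ ≤ (avoiding A (S ∪ insert i T)).card := by
          rw [union_insert]
          exact one_sub_mul_card_avoiding_le (h T hT i (mem_insert_self i T))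

variable {I : Finset ι} {Γ : ι → Finset ι} {D : ℕ} {p : ℝ}

theorem card_avoiding_inter_le {x : ℝ} (hx₀ : 0 ≤ x) (hx₁ : x ≤ 1)
    (hΓ : ∀ i ∈ I, (Γ i).card ≤ D)
    (hA : ∀ i ∈ I, ∀ S ⊆ I, Disjoint S (Γ i) →
      ((avoiding A S ∩ A i).card : ℝ) ≤ p * (avoiding A S).card)
    (hp : p ≤ x * (1 - x) ^ D) {S : Finset ι} (hS : S ⊆ I) {i : ι} (hi : i ∈ I) :
    ((avoiding A S ∩ A i).card : ℝ) ≤ x * (avoiding A S).card := by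
  induction S using Finset.strongInduction generalizing i with
  | H S ih =>
  set S₁ := S ∩ Γ i
  set S₂ := S \ Γ i
  have hS₂ : S₂ ∪ S₁ = S := sdiff_union_inter S (Γ i)
  have hS₂₁ : ∀ T' ⊂ S₁, S₂ ∪ T' ⊂ S := by
    intro T' hT'
    obtain ⟨t, ht, htT'⟩ := (ssubset_iff_of_subset hT'.subset).1 hT'
    refine (ssubset_iff_of_subset ?_).2 ⟨t, (mem_inter.1 ht).1, ?_⟩
    · exact union_subset sdiff_subset (hT'.subset.trans inter_subset_left)
    · simp [S₂, (mem_inter.1 ht).2, htT']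
  have hpeel : (1 - x) ^ S₁.card * (avoiding A S₂).card ≤ (avoiding A S).card := by
    rw [← hS₂]
    refine one_sub_pow_mul_card_avoiding_le hx₁ S₂ S₁ fun T' hT' j hj ↦ ?_
    exact ih _ (hS₂₁ T' hT') ((hS₂₁ T' hT').subset.trans hS) (hS (mem_inter.1 hj).1)
  have hS₁ : S₁.card ≤ D := (card_le_card inter_subset_right).trans (hΓ i hi)
  calc ((avoiding A S ∩ A i).card : ℝ)
      ≤ (avoiding A S₂ ∩ A i).card := by
        gcongr
        exact avoiding_anti sdiff_subset
    _ ≤ p * (avoiding A S₂).card := hA i hi S₂ (sdiff_subset.trans hS) sdiff_disjoint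
    _ ≤ x * (1 - x) ^ D * (avoiding A S₂).card := by gcongr
    _ ≤ x * ((1 - x) ^ S₁.card * (avoiding A S₂).card) := by
        rw [mul_assoc]
        have := pow_le_pow_of_le_one (sub_nonneg.2 hx₁) (by linarith) hS₁
        gcongr
    _ ≤ x * (avoiding A S).card := by gcongr

lemma le_mul_one_sub_pow_of_exp_mul_le (hD : 0 < D) (hp : Real.exp 1 * p * (D + 1) ≤ 1) :
    p ≤ (D + 1 : ℝ)⁻¹ * (1 - (D + 1 : ℝ)⁻¹) ^ D := by
  have hD' : (0 : ℝ) < D := by exact_mod_cast hD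
  have hinv : 1 - (D + 1 : ℝ)⁻¹ = (1 + (D : ℝ)⁻¹)⁻¹ := by field_simp; ring
  have he : (1 + (D : ℝ)⁻¹) ^ D ≤ Real.exp 1 := Real.one_add_inv_pow_le_exp
  rw [hinv, inv_pow, ← div_eq_mul_inv, le_div_iff₀ (by positivity)]
  rcases le_or_gt p 0 with hp₀ | hp₀
  · exact (mul_nonpos_of_nonpos_of_nonneg hp₀ (by positivity)).trans (by positivity)
  calc p * (1 + (D : ℝ)⁻¹) ^ D ≤ p * Real.exp 1 := by gcongr
    _ ≤ (D + 1 : ℝ)⁻¹ := by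
        rw [← one_div, le_div_iff₀ (by positivity)]
        linarith

theorem avoiding_nonempty [Nonempty Ω] (hD : 0 < D)
    (hΓ : ∀ i ∈ I, (Γ i).card ≤ D)
    (hA : ∀ i ∈ I, ∀ S ⊆ I, Disjoint S (Γ i) →
      ((avoiding A S ∩ A i).card : ℝ) ≤ p * (avoiding A S).card)
    (hp : Real.exp 1 * p * (D + 1) ≤ 1) :
    (avoiding A I).Nonempty := by
  set x : ℝ := (D + 1 : ℝ)⁻¹
  have hx₁ : x < 1 := inv_lt_one_of_one_lt₀ (by norm_cast; omega)
  have hbound := one_sub_pow_mul_card_avoiding_le hx₁.le ∅ I fun T' hT' i hi ↦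
    card_avoiding_inter_le (by positivity) hx₁.le hΓ hA (le_mul_one_sub_pow_of_exp_mul_le hD hp)
      (by simpa using hT'.subset) hi
  rw [avoiding_empty, empty_union] at hbound
  rw [← card_pos, ← Nat.cast_pos (α := ℝ)]
  refine lt_of_lt_of_le ?_ hbound
  have : 0 < (univ : Finset Ω).card := card_pos.2 univ_nonempty
  have : 0 < 1 - x := by linarith
  positivity

end LocalLemma

lemma card_inter_mul_pow_card_le {α β : Type*} [Fintype α] [DecidableEq α] [Fintype β]
    [DecidableEq β] (s : Finset α) {T B : Finset (α → β)}
    (hB : ∀ x ∈ B, ∀ y ∈ B, ∀ a ∈ s, x a = y a)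
    (hT : ∀ x ∈ T ∩ B, ∀ y : α → β, (∀ a ∉ s, y a = x a) → y ∈ T) :
    (T ∩ B).card * Fintype.card β ^ s.card ≤ T.card := by
  let recolor (q : (α → β) × (s → β)) : α → β := fun a ↦ if h : a ∈ s then q.2 ⟨a, h⟩ else q.1 a
  calc (T ∩ B).card * Fintype.card β ^ s.card = ((T ∩ B) ×ˢ (univ : Finset (s → β))).card := by
        simp
    _ ≤ T.card := by
      refine card_le_card_of_injOn recolor (fun q hq ↦ ?_) fun q hq q' hq' hqq' ↦ ?_
      · exact hT q.1 (mem_product.1 hq).1 _ fun a ha ↦ dif_neg ha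
      · have hx := (mem_product.1 hq).1
        have hx' := (mem_product.1 hq').1
        refine Prod.ext (funext fun a ↦ ?_) (funext fun a ↦ ?_)
        · by_cases ha : a ∈ s
          · exact hB _ (mem_inter.1 hx).2 _ (mem_inter.1 hx').2 a ha
          · simpa [recolor, ha] using congrFun hqq' a
        · simpa [recolor] using congrFun hqq' a

namespace Hypergraph

open LocalLemma

variable {V : Type*} [DecidableEq V] (E : Finset (Finset V))

-- Only the vertices covered by `E` are coloured, so that the colourings form a finite type.
abbrev Coloring : Type _ := ↥(E.sup id) → Fin 2

def monochromatic (p : Finset V × Fin 2) : Finset (Coloring E) :=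
  univ.filter fun x ↦ ∀ v : ↥(E.sup id), ↑v ∈ p.1 → x v = p.2

def conflicts (p : Finset V × Fin 2) : Finset (Finset V × Fin 2) :=
  E.filter (fun g ↦ (p.1 ∩ g).Nonempty) ×ˢ univ.erase p.2

variable {E}

lemma card_conflicts_le {f : Finset V} {d : ℕ} (j : Fin 2) (hf : f ∈ E)
    (hmeet : (E.filter (fun g ↦ g ≠ f ∧ (f ∩ g).Nonempty)).card ≤ d) :
    (conflicts E (f, j)).card ≤ d + 1 := by
  have hsub : E.filter (fun g ↦ (f ∩ g).Nonempty) ⊆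
      insert f (E.filter fun g ↦ g ≠ f ∧ (f ∩ g).Nonempty) := by
    intro g hg
    by_cases hgf : g = f <;> simp_all
  have := (card_le_card hsub).trans (card_insert_le _ _)
  rw [conflicts, card_product, card_erase_of_mem (mem_univ j), card_univ, Fintype.card_fin]
  dsimp only
  omega

lemma card_avoiding_inter_monochromatic_le {f : Finset V} {k : ℕ} (j : Fin 2) (hf : f ∈ E)
    (hk : k ≤ f.card) {S : Finset (Finset V × Fin 2)} (hS : S ⊆ E ×ˢ univ)
    (hdisj : Disjoint S (conflicts E (f, j))) :
    ((avoiding (monochromatic E) S ∩ monochromatic E (f, j)).card : ℝ) ≤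
      ((2 : ℝ) ^ k)⁻¹ * (avoiding (monochromatic E) S).card := by
  have hconst : ∀ x ∈ monochromatic E (f, j), ∀ y ∈ monochromatic E (f, j),
      ∀ v ∈ f.subtype (· ∈ E.sup id), x v = y v := by
    intro x hx y hy v hv
    simp only [monochromatic, mem_filter, mem_univ, true_and] at hx hy
    rw [mem_subtype] at hv
    rw [hx v hv, hy v hv]
  -- A witness against some `q ∈ S` never lies in `f`: it would put `q` among the conflicts.
  have hclosed : ∀ x ∈ avoiding (monochromatic E) S ∩ monochromatic E (f, j), ∀ y,
      (∀ v ∉ f.subtype (· ∈ E.sup id), y v = x v) → y ∈ avoiding (monochromatic E) S := by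
    intro x hx y hyx
    obtain ⟨hxS, hxf⟩ := mem_inter.1 hx
    simp only [monochromatic, mem_avoiding, mem_filter, mem_univ, true_and, not_forall,
      exists_prop] at hxS hxf ⊢
    intro q hq
    obtain ⟨v, hvq, hxv⟩ := hxS q hq
    have hvf : ↑v ∉ f := fun hvf ↦ disjoint_left.1 hdisj hq <| mem_product.2
      ⟨mem_filter.2 ⟨(mem_product.1 (hS hq)).1, ⟨v, mem_inter.2 ⟨hvf, hvq⟩⟩⟩,
        mem_erase.2 ⟨fun hqj ↦ hxv (hqj ▸ hxf v hvf), mem_univ _⟩⟩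
    exact ⟨v, hvq, by rwa [hyx v (by rwa [mem_subtype])]⟩
  have hrecolor := card_inter_mul_pow_card_le _ hconst hclosed
  have hcard : (f.subtype (· ∈ E.sup id)).card = f.card := by
    rw [card_subtype, filter_true_of_mem (s := f) fun v hv ↦ le_sup (f := id) hf hv]
  rw [hcard, Fintype.card_fin] at hrecolor
  rw [inv_mul_eq_div, le_div_iff₀ (by positivity)]
  calc _ ≤ ((avoiding (monochromatic E) S ∩ monochromatic E (f, j)).card : ℝ) * 2 ^ f.card := by
        gcongr; norm_num
    _ ≤ _ := by exact_mod_cast hrecolor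

lemma exists_ne_of_forall_notMem_monochromatic {x : Coloring E} {f : Finset V}
    (h : ∀ j, x ∉ monochromatic E (f, j)) : ∃ v w : ↥(E.sup id), ↑v ∈ f ∧ ↑w ∈ f ∧ x v ≠ x w := by
  obtain ⟨v, hv, -⟩ : ∃ v : ↥(E.sup id), ↑v ∈ f ∧ x v ≠ 0 := by
    simpa only [monochromatic, mem_filter, mem_univ, true_and, not_forall, exists_prop] using h 0
  obtain ⟨w, hw, hwv⟩ : ∃ w : ↥(E.sup id), ↑w ∈ f ∧ x w ≠ x v := by
    simpa only [monochromatic, mem_filter, mem_univ, true_and, not_forall, exists_prop]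
      using h (x v)
  exact ⟨v, w, hv, hw, hwv.symm⟩

end Hypergraph

open LocalLemma Hypergraph in
/-- **Theorem (McDiarmid 1997).** Let `H` be a hypergraph in which every edge
contains at least `k` vertices and meets at most `d` other edges.
If `e(d+2) ≤ 2^k` then `H` has a 2-coloring, i.e. there is a coloring of the
vertices with 2 colors such that no edge is monochromatic. -/
theorem hypergraph_two_coloring_McDiarmid {V : Type*} [DecidableEq V]
    (E : Finset (Finset V)) (k d : ℕ)
    (hcard : ∀ f ∈ E, k ≤ f.card)
    (hmeet : ∀ f ∈ E, (E.filter (fun g => g ≠ f ∧ (f ∩ g).Nonempty)).card ≤ d)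
    (hineq : Real.exp 1 * ((d : ℝ) + 2) ≤ 2 ^ k) :
    ∃ c : V → Fin 2, ∀ f ∈ E, ∃ v ∈ f, ∃ w ∈ f, c v ≠ c w := by
  have hp : Real.exp 1 * ((2 : ℝ) ^ k)⁻¹ * ((d + 1 : ℕ) + 1) ≤ 1 := by
    rw [mul_right_comm, ← div_eq_mul_inv, div_le_one (by positivity)]
    push_cast
    linarith
  obtain ⟨x, hx⟩ := avoiding_nonempty (A := monochromatic E) (I := E ×ˢ univ) d.succ_pos
    (fun p hp ↦ card_conflicts_le p.2 (mem_product.1 hp).1 (hmeet _ (mem_product.1 hp).1))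
    (fun p hp S hS hdisj ↦ card_avoiding_inter_monochromatic_le p.2 (mem_product.1 hp).1
      (hcard _ (mem_product.1 hp).1) hS hdisj) hp
  refine ⟨fun v ↦ if h : v ∈ E.sup id then x ⟨v, h⟩ else 0, fun f hf ↦ ?_⟩
  obtain ⟨v, w, hv, hw, hvw⟩ := exists_ne_of_forall_notMem_monochromatic
    fun j ↦ mem_avoiding.1 hx (f, j) (mem_product.2 ⟨hf, mem_univ j⟩)
  exact ⟨v, hv, w, hw, by simpa [v.2, w.2] using hvw⟩
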